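/- arXiv:1612.09493 — 3 statements merged into one kernel-verified Lean document; each statement's English description precedes it below -/
import Mathlib

section
/- In the Lie algebra 𝔤, the subspace 𝔞 = span{z, b, x₁, x₂, x₃, x₄} is a 6-dimensional solvable Lie ideal of 𝔤, and 𝔞 equals the radical of 𝔤 (the largest solvable ideal of 𝔤). -/
noncomputable section

/-- The underlying space of the 9-dimensional Lie algebra `𝔤`; coordinates are taken
with respect to the ordered basis `z, b, x₁, x₂, x₃, x₄, h, e, f`
(so index 0 = z, 1 = b, 2 = x₁, 3 = x₂, 4 = x₃, 5 = x₄, 6 = h, 7 = e, 8 = f). -/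
def G : Type := Fin 9 → ℝ

instance : AddCommGroup G := inferInstanceAs (AddCommGroup (Fin 9 → ℝ))
instance : Module ℝ G := inferInstanceAs (Module ℝ (Fin 9 → ℝ))

@[simp] lemma G.add_apply (u v : G) (k : Fin 9) : (u + v) k = u k + v k := rfl
@[simp] lemma G.smul_apply (c : ℝ) (u : G) (k : Fin 9) : (c • u) k = c * u k := rfl
@[simp] lemma G.zero_apply (k : Fin 9) : (0 : G) k = 0 := rfl

/-- The Lie bracket of `𝔤` determined by `[b,xᵢ] = xᵢ`, `[b,z] = 2z`, `[h,x₁] = −3x₁`,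
`[h,x₂] = −x₂`, `[h,x₃] = x₃`, `[h,x₄] = 3x₄`, `[f,x₂] = −3x₁`, `[f,x₃] = −2x₂`,
`[f,x₄] = −x₃`, `[e,x₁] = x₂`, `[e,x₂] = 2x₃`, `[e,x₃] = 3x₄`, `[x₁,x₄] = z`,
`[x₂,x₃] = −3z`, `[h,f] = −2f`, `[h,e] = 2e`, `[f,e] = h`, all other brackets of
basis elements being zero. -/
def gb (u v : G) : G := fun k =>
  match k with
  | 0 => -2*(u 0*v 1 - u 1*v 0) + (u 2*v 5 - u 5*v 2) - 3*(u 3*v 4 - u 4*v 3)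
  | 1 => 0
  | 2 => (u 1*v 2 - u 2*v 1) + 3*(u 2*v 6 - u 6*v 2) + 3*(u 3*v 8 - u 8*v 3)
  | 3 => (u 1*v 3 - u 3*v 1) - (u 2*v 7 - u 7*v 2) + (u 3*v 6 - u 6*v 3) + 2*(u 4*v 8 - u 8*v 4)
  | 4 => (u 1*v 4 - u 4*v 1) - 2*(u 3*v 7 - u 7*v 3) - (u 4*v 6 - u 6*v 4) + (u 5*v 8 - u 8*v 5)
  | 5 => (u 1*v 5 - u 5*v 1) - 3*(u 4*v 7 - u 7*v 4) - 3*(u 5*v 6 - u 6*v 5)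
  | 6 => -(u 7*v 8 - u 8*v 7)
  | 7 => 2*(u 6*v 7 - u 7*v 6)
  | 8 => -2*(u 6*v 8 - u 8*v 6)

instance : LieRing G where
  bracket := gb
  add_lie := by intro x y z; funext k; fin_cases k <;> simp only [gb, G.add_apply] <;> ring
  lie_add := by intro x y z; funext k; fin_cases k <;> simp only [gb, G.add_apply] <;> ring
  lie_self := by intro x; funext k; fin_cases k <;> simp only [gb, G.zero_apply] <;> ring
  leibniz_lie := by intro x y z; funext k; fin_cases k <;> simp only [gb, G.add_apply] <;> ring

lemma G.lie_def (u v : G) : ⁅u, v⁆ = gb u v := rfl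

instance : LieAlgebra ℝ G where
  lie_smul := by
    intro c x y; funext k
    rw [G.lie_def, G.lie_def]
    fin_cases k <;> simp only [gb, G.smul_apply] <;> ring

/-- basis vector `z` -/ def zv : G := Pi.single 0 1
/-- basis vector `b` -/ def bv : G := Pi.single 1 1
/-- basis vector `x₁` -/ def x1v : G := Pi.single 2 1
/-- basis vector `x₂` -/ def x2v : G := Pi.single 3 1
/-- basis vector `x₃` -/ def x3v : G := Pi.single 4 1
/-- basis vector `x₄` -/ def x4v : G := Pi.single 5 1
/-- basis vector `h` -/ def hv : G := Pi.single 6 1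
/-- basis vector `e` -/ def ev : G := Pi.single 7 1
/-- basis vector `f` -/ def fv : G := Pi.single 8 1

/-! The `h`, `e`, `f` coordinates of a bracket are the `𝔰𝔩₂` bracket of those of its arguments,
so the vectors where they vanish form an ideal `𝔞` with `𝔤/𝔞 ≅ 𝔰𝔩₂`.
Its derived series runs through `span{z, x₁, …, x₄}` and `ℝz` down to `0`, so `𝔞` is solvable.
Conversely, an ideal `K ⊄ 𝔞` contains some `w` whose `𝔰𝔩₂`-component is a nonzero multiple of
`e`; then `⁅⁅f, w⁆, w⁆ ∈ ⁅K, K⁆` has the same property, so the derived series of `K` never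
reaches `0`. Hence every solvable ideal lies in `𝔞`, which is therefore the radical. -/

open Module LieAlgebra

section CoordinateSubspace

variable {K ι : Type*}

lemma Submodule.pi_bot_eq_ker_funLeft [Semiring K] (s : Set ι) :
    Submodule.pi s (fun _ => (⊥ : Submodule K K)) =
      LinearMap.ker (LinearMap.funLeft K K (Subtype.val : s → ι)) := by
  ext x
  simp [funext_iff]

lemma Submodule.finrank_pi_bot [DivisionRing K] [Fintype ι] (s : Finset ι) :
    finrank K (Submodule.pi (s : Set ι) fun _ => (⊥ : Submodule K K)) =
      Fintype.card ι - s.card := by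
  let restrict := LinearMap.funLeft K K (Subtype.val : ↥(s : Set ι) → ι)
  have hrange : LinearMap.range restrict = ⊤ :=
    LinearMap.range_eq_top.mpr
      (LinearMap.funLeft_surjective_of_injective _ _ _ Subtype.val_injective)
  have hrank := LinearMap.finrank_range_add_finrank_ker restrict
  rw [hrange, finrank_top, ← Submodule.pi_bot_eq_ker_funLeft] at hrank
  simp only [SetLike.coe_sort_coe, finrank_fintype_fun_eq_card, Fintype.card_coe] at hrank
  omega

lemma Submodule.pi_bot_eq_span_basisFun [Semiring K] [Finite ι] (s : Set ι) :
    Submodule.pi s (fun _ => (⊥ : Submodule K K)) = Submodule.span K (Pi.basisFun K ι '' sᶜ) := by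
  ext x
  rw [Basis.mem_span_image]
  simp [Set.subset_def, not_imp_comm]

end CoordinateSubspace

namespace G

instance : FiniteDimensional ℝ G := inferInstanceAs (FiniteDimensional ℝ (Fin 9 → ℝ))

def vanishing (s : Finset (Fin 9)) : Submodule ℝ G := Submodule.pi s fun _ => ⊥

lemma mem_vanishing {s : Finset (Fin 9)} {u : G} : u ∈ vanishing s ↔ ∀ i ∈ s, u i = 0 :=
  Iff.rfl

def aIdeal : LieIdeal ℝ G :=
  { vanishing {6, 7, 8} with
    lie_mem := by
      intro u v hv
      simp only [Submodule.carrier_eq_coe, SetLike.mem_coe, mem_vanishing, Finset.mem_insert,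
        Finset.mem_singleton, forall_eq_or_imp, forall_eq] at hv ⊢
      obtain ⟨h6, h7, h8⟩ := hv
      simp [lie_def, gb, h6, h7, h8] }

def nIdeal : LieIdeal ℝ G :=
  { vanishing {1, 6, 7, 8} with
    lie_mem := by
      intro u v hv
      simp only [Submodule.carrier_eq_coe, SetLike.mem_coe, mem_vanishing, Finset.mem_insert,
        Finset.mem_singleton, forall_eq_or_imp, forall_eq] at hv ⊢
      obtain ⟨-, h6, h7, h8⟩ := hv
      simp [lie_def, gb, h6, h7, h8] }

def zIdeal : LieIdeal ℝ G :=
  { vanishing {1, 2, 3, 4, 5, 6, 7, 8} with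
    lie_mem := by
      intro u v hv
      simp only [Submodule.carrier_eq_coe, SetLike.mem_coe, mem_vanishing, Finset.mem_insert,
        Finset.mem_singleton, forall_eq_or_imp, forall_eq] at hv ⊢
      obtain ⟨h1, h2, h3, h4, h5, h6, h7, h8⟩ := hv
      simp [lie_def, gb, h1, h2, h3, h4, h5, h6, h7, h8] }

lemma mem_aIdeal {u : G} : u ∈ aIdeal ↔ u 6 = 0 ∧ u 7 = 0 ∧ u 8 = 0 :=
  mem_vanishing.trans (by simp)

lemma mem_nIdeal {u : G} : u ∈ nIdeal ↔ u 1 = 0 ∧ u 6 = 0 ∧ u 7 = 0 ∧ u 8 = 0 :=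
  mem_vanishing.trans (by simp)

lemma mem_zIdeal {u : G} :
    u ∈ zIdeal ↔ u 1 = 0 ∧ u 2 = 0 ∧ u 3 = 0 ∧ u 4 = 0 ∧ u 5 = 0 ∧ u 6 = 0 ∧ u 7 = 0 ∧ u 8 = 0 :=
  mem_vanishing.trans (by simp)

lemma coe_aIdeal_eq_span :
    (aIdeal : Submodule ℝ G) = Submodule.span ℝ {zv, bv, x1v, x2v, x3v, x4v} := by
  have hcompl : ({6, 7, 8} : Set (Fin 9))ᶜ = {0, 1, 2, 3, 4, 5} := by
    ext i; fin_cases i <;> simp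
  change vanishing {6, 7, 8} = _
  rw [vanishing, Finset.coe_insert, Finset.coe_insert, Finset.coe_singleton,
    Submodule.pi_bot_eq_span_basisFun, hcompl]
  simp only [Set.image_insert_eq, Set.image_singleton, Pi.basisFun_apply]
  rfl

lemma finrank_aIdeal : finrank ℝ aIdeal = 6 :=
  Submodule.finrank_pi_bot (K := ℝ) ({6, 7, 8} : Finset (Fin 9))

lemma lie_aIdeal_le : ⁅aIdeal, aIdeal⁆ ≤ nIdeal := by
  rw [LieSubmodule.lie_le_iff]
  rintro u hu v hv
  obtain ⟨hu6, hu7, hu8⟩ := mem_aIdeal.mp hu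
  obtain ⟨hv6, hv7, hv8⟩ := mem_aIdeal.mp hv
  simp [mem_nIdeal, lie_def, gb, hu6, hu7, hu8, hv6, hv7, hv8]

lemma lie_nIdeal_le : ⁅nIdeal, nIdeal⁆ ≤ zIdeal := by
  rw [LieSubmodule.lie_le_iff]
  rintro u hu v hv
  obtain ⟨hu1, hu6, hu7, hu8⟩ := mem_nIdeal.mp hu
  obtain ⟨hv1, hv6, hv7, hv8⟩ := mem_nIdeal.mp hv
  simp [mem_zIdeal, lie_def, gb, hu1, hu6, hu7, hu8, hv1, hv6, hv7, hv8]

lemma lie_zIdeal : ⁅zIdeal, zIdeal⁆ = ⊥ := by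
  rw [eq_bot_iff, LieSubmodule.lie_le_iff]
  rintro u hu v hv
  obtain ⟨hu1, hu2, hu3, hu4, hu5, hu6, hu7, hu8⟩ := mem_zIdeal.mp hu
  obtain ⟨hv1, hv2, hv3, hv4, hv5, hv6, hv7, hv8⟩ := mem_zIdeal.mp hv
  rw [LieSubmodule.mem_bot]
  funext k
  fin_cases k <;>
    simp [lie_def, gb, hu1, hu2, hu3, hu4, hu5, hu6, hu7, hu8, hv1, hv2, hv3, hv4, hv5, hv6, hv7,
      hv8]

lemma isSolvable_aIdeal : IsSolvable aIdeal := by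
  have h2 : derivedSeriesOfIdeal ℝ G 2 aIdeal ≤ zIdeal :=
    (LieSubmodule.mono_lie lie_aIdeal_le lie_aIdeal_le).trans lie_nIdeal_le
  have h3 : derivedSeriesOfIdeal ℝ G 3 aIdeal = ⊥ :=
    eq_bot_iff.mpr (lie_zIdeal ▸ LieSubmodule.mono_lie h2 h2)
  exact IsSolvable.mk ((LieIdeal.derivedSeries_eq_bot_iff aIdeal 3).mpr h3)

lemma lie_apply_six (u v : G) : ⁅u, v⁆ 6 = -(u 7 * v 8 - u 8 * v 7) := rfl

lemma lie_apply_seven (u v : G) : ⁅u, v⁆ 7 = 2 * (u 6 * v 7 - u 7 * v 6) := rfl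

lemma lie_apply_eight (u v : G) : ⁅u, v⁆ 8 = -2 * (u 6 * v 8 - u 8 * v 6) := rfl

def IsELike (w : G) : Prop := w 6 = 0 ∧ w 7 ≠ 0 ∧ w 8 = 0

lemma IsELike.not_mem_aIdeal {w : G} (hw : IsELike w) : w ∉ aIdeal :=
  fun h => hw.2.1 (mem_aIdeal.mp h).2.1

lemma IsELike.lie_lie_fv {w : G} (hw : IsELike w) : IsELike ⁅⁅fv, w⁆, w⁆ := by
  obtain ⟨h6, h7, h8⟩ := hw
  simp only [IsELike, lie_apply_six, lie_apply_seven, lie_apply_eight]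
  simp [fv, h6, h7, h8]

lemma exists_isELike_mem {K : LieIdeal ℝ G} {u : G} (hu : u ∈ K) (hua : u ∉ aIdeal) :
    ∃ w ∈ K, IsELike w := by
  rw [mem_aIdeal] at hua
  by_cases h8 : u 8 = 0
  · by_cases h6 : u 6 = 0
    · exact ⟨u, hu, h6, fun h7 => hua ⟨h6, h7, h8⟩, h8⟩
    · refine ⟨⁅ev, u⁆, K.lie_mem hu, ?_⟩
      simp only [IsELike, lie_apply_six, lie_apply_seven, lie_apply_eight]
      simp [ev, h6, h8]
  · refine ⟨⁅ev, ⁅ev, u⁆⁆, K.lie_mem (K.lie_mem hu), ?_⟩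
    simp only [IsELike, lie_apply_six, lie_apply_seven, lie_apply_eight]
    simp [ev, h8]

lemma lie_not_le_aIdeal {K : LieIdeal ℝ G} (hK : ¬ K ≤ aIdeal) : ¬ ⁅K, K⁆ ≤ aIdeal := by
  obtain ⟨u, hu, hua⟩ := SetLike.not_le_iff_exists.mp hK
  obtain ⟨w, hw, hwE⟩ := exists_isELike_mem hu hua
  exact fun h => hwE.lie_lie_fv.not_mem_aIdeal (h (LieSubmodule.lie_mem_lie (K.lie_mem hw) hw))

lemma le_aIdeal_of_isSolvable (K : LieIdeal ℝ G) [IsSolvable K] : K ≤ aIdeal := by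
  obtain ⟨k, hk⟩ := IsSolvable.solvable (R := ℝ) (L := K)
  by_contra hK
  have hD : ∀ n, ¬ derivedSeriesOfIdeal ℝ G n K ≤ aIdeal := by
    intro n
    induction n with
    | zero => exact hK
    | succ n ih => rw [derivedSeriesOfIdeal_succ]; exact lie_not_le_aIdeal ih
  exact hD k (((LieIdeal.derivedSeries_eq_bot_iff K k).mp hk).symm ▸ bot_le)

lemma aIdeal_eq_radical : aIdeal = radical ℝ G :=
  le_antisymm ((LieIdeal.solvable_iff_le_radical ℝ G aIdeal).mp isSolvable_aIdeal)
    (le_aIdeal_of_isSolvable _)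

end G

/-- The subspace `𝔞 = span{z, b, x₁, x₂, x₃, x₄}` is a 6-dimensional
solvable Lie ideal of `𝔤`, and it equals the radical of `𝔤` (the largest solvable ideal). -/
theorem stmt1 :
    ∃ I : LieIdeal ℝ G,
      (I : Submodule ℝ G) = Submodule.span ℝ {zv, bv, x1v, x2v, x3v, x4v} ∧
      Module.finrank ℝ I = 6 ∧
      LieAlgebra.IsSolvable I ∧
      I = LieAlgebra.radical ℝ G :=
  ⟨G.aIdeal, G.coe_aIdeal_eq_span, G.finrank_aIdeal, G.isSolvable_aIdeal, G.aIdeal_eq_radical⟩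
end
end

section
/- In the Lie algebra 𝔤, the subspace 𝔥 = span{x₁, h − b, f − z} is a 3-dimensional solvable Lie subalgebra (with brackets [h−b, x₁] = −4x₁, [h−b, f−z] = −2(f−z), [x₁, f−z] = 0), and the intersection 𝔥 ∩ span{x₁, x₂, x₃, x₄} is the one-dimensional line ℝx₁. -/
noncomputable section

/-!
The brackets of the three generators `x₁, h − b, f − z` all lie in `span{x₁, f − z} ⊆ 𝔥`, so by
bilinearity `[𝔥, 𝔥] ⊆ span{x₁, f − z}`; this plane is abelian because `[x₁, f − z] = 0`, which
gives both closure and solvability. For the intersection, the `h`- and `f`-coordinates vanish on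
`span{x₁, …, x₄}`, while on `a x₁ + b (h − b) + c (f − z)` they read off `b` and `c`.
-/

open Submodule

@[simp] lemma G.sub_apply (u v : G) (k : Fin 9) : (u - v) k = u k - v k := rfl

section LieSpan

variable {R L : Type*} [CommRing R] [LieRing L] [LieAlgebra R L]

theorem lie_mem_of_mem_span {s : Set L} {p : Submodule R L}
    (h : ∀ x ∈ s, ∀ y ∈ s, ⁅x, y⁆ ∈ p) {u v : L} (hu : u ∈ span R s) (hv : v ∈ span R s) :
    ⁅u, v⁆ ∈ p := by
  induction hu, hv using span_induction₂ with
  | mem_mem x y hx hy => exact h x hx y hy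
  | zero_left => simp
  | zero_right => simp
  | add_left _ _ _ _ _ _ h₁ h₂ => rw [add_lie]; exact add_mem h₁ h₂
  | add_right _ _ _ _ _ _ h₁ h₂ => rw [lie_add]; exact add_mem h₁ h₂
  | smul_left r _ _ _ _ h₁ => rw [smul_lie]; exact smul_mem _ r h₁
  | smul_right r _ _ _ _ h₁ => rw [lie_smul]; exact smul_mem _ r h₁

theorem lie_eq_zero_of_mem_span_pair {a b u v : L} (hab : ⁅a, b⁆ = 0)
    (hu : u ∈ span R {a, b}) (hv : v ∈ span R {a, b}) : ⁅u, v⁆ = 0 := by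
  have hba : ⁅b, a⁆ = 0 := by rw [← lie_skew, hab, neg_zero]
  refine (mem_bot R).1 (lie_mem_of_mem_span ?_ hu hv)
  rintro x (rfl | rfl) y (rfl | rfl) <;> simp [hab, hba]

end LieSpan

lemma lie_hb_x1 : ⁅hv - bv, x1v⁆ = (-4 : ℝ) • x1v := by
  rw [G.lie_def]; funext k
  fin_cases k <;> simp only [gb, G.sub_apply, G.smul_apply] <;> simp [x1v, hv, bv]
  all_goals norm_num

lemma lie_hb_fz : ⁅hv - bv, fv - zv⁆ = (-2 : ℝ) • (fv - zv) := by
  rw [G.lie_def]; funext k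
  fin_cases k <;> simp only [gb, G.sub_apply, G.smul_apply] <;> simp [fv, zv, hv, bv]

lemma lie_x1_fz : ⁅x1v, fv - zv⁆ = 0 := by
  rw [G.lie_def]; funext k
  fin_cases k <;> simp only [gb, G.sub_apply, G.zero_apply] <;> simp [x1v, fv, zv]

lemma lie_mem_span_x1_fz {x y : G} (hx : x ∈ ({x1v, hv - bv, fv - zv} : Set G))
    (hy : y ∈ ({x1v, hv - bv, fv - zv} : Set G)) : ⁅x, y⁆ ∈ span ℝ {x1v, fv - zv} := by
  have hx1 : x1v ∈ span ℝ {x1v, fv - zv} := subset_span (by simp)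
  have hfz : fv - zv ∈ span ℝ {x1v, fv - zv} := subset_span (by simp)
  rcases hx with rfl | rfl | rfl <;> rcases hy with rfl | rfl | rfl <;>
    simp only [lie_self, lie_hb_x1, lie_hb_fz, lie_x1_fz, ← lie_skew x1v (hv - bv),
      ← lie_skew (fv - zv) (hv - bv), ← lie_skew (fv - zv) x1v, neg_zero, neg_mem_iff, zero_mem,
      smul_mem _ _ hx1, smul_mem _ _ hfz]

lemma apply_h_f_eq_zero_of_mem_span_x {u : G} (hu : u ∈ span ℝ {x1v, x2v, x3v, x4v}) :
    u 6 = 0 ∧ u 8 = 0 := by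
  induction hu using span_induction with
  | mem x hx => rcases hx with rfl | rfl | rfl | rfl <;> simp [x1v, x2v, x3v, x4v]
  | zero => simp
  | add x y _ _ hx hy => simp [hx, hy]
  | smul t x _ hx => simp [hx]

lemma linearIndependent_x1_hb_fz : LinearIndependent ℝ ![x1v, hv - bv, fv - zv] := by
  rw [Fintype.linearIndependent_iff]
  intro c hc i
  have h2 := congrFun hc 2
  have h6 := congrFun hc 6
  have h8 := congrFun hc 8
  simp only [Fin.sum_univ_three, Matrix.cons_val_zero, Matrix.cons_val_one, Matrix.cons_val_two,
    Matrix.head_cons, Matrix.tail_cons, G.add_apply, G.smul_apply, G.sub_apply] at h2 h6 h8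
  simp [x1v, hv, bv, fv, zv] at h2 h6 h8
  fin_cases i <;> assumption

lemma finrank_span_x1_hb_fz : Module.finrank ℝ (span ℝ {x1v, hv - bv, fv - zv}) = 3 := by
  have := finrank_span_eq_card linearIndependent_x1_hb_fz
  rwa [Matrix.range_cons, Matrix.range_cons, Matrix.range_cons_empty, Set.singleton_union,
    Set.singleton_union, Fintype.card_fin] at this

lemma span_x1_hb_fz_inf_span_x :
    span ℝ {x1v, hv - bv, fv - zv} ⊓ span ℝ {x1v, x2v, x3v, x4v} = span ℝ {x1v} := by
  refine le_antisymm ?_ ?_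
  · rintro u ⟨hu, hux⟩
    obtain ⟨a, b, c, rfl⟩ := mem_span_triple.1 hu
    obtain ⟨hb, hc⟩ := apply_h_f_eq_zero_of_mem_span_x hux
    simp only [G.add_apply, G.smul_apply, G.sub_apply] at hb hc
    simp [x1v, hv, bv, fv, zv] at hb hc
    simpa [hb, hc] using smul_mem _ a (mem_span_singleton_self x1v)
  · rw [span_le, Set.singleton_subset_iff]
    exact ⟨subset_span (by simp), subset_span (by simp)⟩

/-- The subspace `𝔥 = span{x₁, h − b, f − z}` is a 3-dimensional solvable
Lie subalgebra of `𝔤` (with brackets `[h−b, x₁] = −4x₁`, `[h−b, f−z] = −2(f−z)`,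
`[x₁, f−z] = 0`), and the intersection `𝔥 ∩ span{x₁, x₂, x₃, x₄}` is the one-dimensional
line `ℝx₁`. -/
theorem stmt5 :
    let H : Submodule ℝ G := Submodule.span ℝ {x1v, hv - bv, fv - zv}
    -- `𝔥` is a Lie subalgebra
    (∀ u ∈ H, ∀ v ∈ H, ⁅u, v⁆ ∈ H) ∧
    -- of dimension 3
    Module.finrank ℝ H = 3 ∧
    -- with the stated brackets
    ⁅hv - bv, x1v⁆ = (-4 : ℝ) • x1v ∧
    ⁅hv - bv, fv - zv⁆ = (-2 : ℝ) • (fv - zv) ∧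
    ⁅x1v, fv - zv⁆ = 0 ∧
    -- it is solvable (2-step: the derived algebra is abelian)
    (∀ u₁ ∈ H, ∀ v₁ ∈ H, ∀ u₂ ∈ H, ∀ v₂ ∈ H, ⁅(⁅u₁, v₁⁆ : G), ⁅u₂, v₂⁆⁆ = 0) ∧
    -- and the intersection with `span{x₁, x₂, x₃, x₄}` is the line `ℝx₁`
    H ⊓ Submodule.span ℝ {x1v, x2v, x3v, x4v} = Submodule.span ℝ {x1v} := by
  intro H
  have hD : ∀ u ∈ H, ∀ v ∈ H, ⁅u, v⁆ ∈ span ℝ {x1v, fv - zv} := fun _ hu _ hv ↦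
    lie_mem_of_mem_span (fun _ hx _ hy ↦ lie_mem_span_x1_fz hx hy) hu hv
  have hDH : span ℝ {x1v, fv - zv} ≤ H :=
    span_mono (Set.insert_subset_insert (Set.subset_insert _ _))
  exact ⟨fun u hu v hv ↦ hDH (hD u hu v hv), finrank_span_x1_hb_fz,
    lie_hb_x1, lie_hb_fz, lie_x1_fz,
    fun u₁ hu₁ v₁ hv₁ u₂ hu₂ v₂ hv₂ ↦
      lie_eq_zero_of_mem_span_pair lie_x1_fz (hD u₁ hu₁ v₁ hv₁) (hD u₂ hu₂ v₂ hv₂),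
    span_x1_hb_fz_inf_span_x⟩
end
end

section
/- The linear map σ : 𝔤 → 𝔤 defined on the basis by σ(xᵢ) = −xᵢ for i = 1, 2, 3, 4 and σ fixing z, b, h, e, f is a Lie algebra automorphism of 𝔤; it preserves the subalgebra 𝔥 = span{x₁, h − b, f − z}, and the induced linear automorphism σ̄ of 𝔪 = 𝔤/𝔥 conjugates J to −J, i.e. σ̄ ∘ J = −J ∘ σ̄. -/
/-!
`σ` is the grading automorphism of the `ℤ/2`-grading of `𝔤` in which `x₁, …, x₄` are odd and
`z, b, h, e, f` are even; every structure constant of `𝔤` respects this grading, so `σ` is a Lie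
algebra involution. The generators of `𝔥` are `σ`-eigenvectors, so `σ` preserves `𝔥`. On `𝔪` the
even classes `z̄, b̄, ē` and the odd classes `x̄₂, x̄₃, x̄₄` span everything (as `x̄₁ = 0`, `h̄ = b̄`,
`f̄ = z̄`), `σ̄` is `+1` on the former and `−1` on the latter, and `J` interchanges the two families.
-/

noncomputable section

/-- The subalgebra `𝔥 = span{x₁, h − b, f − z}` (as a subspace of `𝔤`). -/
def Hsub : Submodule ℝ G := Submodule.span ℝ {x1v, hv - bv, fv - zv}

/-- The quotient map `π : 𝔤 → 𝔪 = 𝔤/𝔥`. -/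
def pr : G →ₗ[ℝ] G ⧸ Hsub := Hsub.mkQ

/-- The defining values of the invariant almost complex structure `J` on `𝔪 = 𝔤/𝔥`:
`J z̄ = x̄₂`, `J b̄ = −x̄₃`, `J ē = x̄₄`, `J x̄₂ = −z̄`, `J x̄₃ = b̄`, `J x̄₄ = −ē`. -/
def IsJ (J : Module.End ℝ (G ⧸ Hsub)) : Prop :=
  J (pr zv) = pr x2v ∧ J (pr bv) = -pr x3v ∧ J (pr ev) = pr x4v ∧
  J (pr x2v) = -pr zv ∧ J (pr x3v) = pr bv ∧ J (pr x4v) = -pr ev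

/-- The linear map `σ : 𝔤 → 𝔤` with `σ(xᵢ) = −xᵢ` (i = 1,…,4) and `σ` fixing
`z, b, h, e, f`. -/
def sigma : G →ₗ[ℝ] G where
  toFun u := fun k => (![1, 1, -1, -1, -1, -1, 1, 1, 1] : Fin 9 → ℝ) k * u k
  map_add' u v := by funext k; simp [mul_add]; rfl
  map_smul' c u := by funext k; simp [G.smul_apply]; show _ = c * (_ * u k); ring

open Submodule

theorem Submodule.map_span_eq_self_of_involutive {R M : Type*} [Semiring R] [AddCommMonoid M]
    [Module R M] {f : M →ₗ[R] M} (hf : Function.Involutive f) {s : Set M}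
    (hs : ∀ x ∈ s, f x ∈ span R s) : (span R s).map f = span R s := by
  have hle : (span R s).map f ≤ span R s := (map_span_le f s _).mpr hs
  have hff : f ∘ₗ f = LinearMap.id := LinearMap.ext hf
  refine le_antisymm hle ?_
  calc span R s = ((span R s).map f).map f := by rw [← map_comp, hff, map_id]
    _ ≤ (span R s).map f := map_mono hle

theorem LinearMap.comp_eq_neg_comp_of_swaps_eigenvectors {R M : Type*} [Ring R] [AddCommGroup M]
    [Module R M] {S J : Module.End R M} {P Q : Set M} (hspan : span R (P ∪ Q) = ⊤)
    (hSP : ∀ x ∈ P, S x = x) (hSQ : ∀ x ∈ Q, S x = -x)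
    (hJP : ∀ x ∈ P, J x ∈ span R Q) (hJQ : ∀ x ∈ Q, J x ∈ span R P) :
    S ∘ₗ J = -(J ∘ₗ S) := by
  have hSP' : Set.EqOn S LinearMap.id (span R P) := eqOn_span' hSP
  have hSQ' : Set.EqOn S (-LinearMap.id) (span R Q) := eqOn_span' hSQ
  refine ext_on hspan ?_
  rintro x (hx | hx)
  · simp [hSQ' (hJP x hx), hSP x hx]
  · simp [hSP' (hJQ x hx), hSQ x hx]

lemma G.neg_apply (u : G) (k : Fin 9) : (-u) k = -(u k) := rfl

lemma G.eq_sum_basis (u : G) :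
    u = u 0 • zv + u 1 • bv + u 2 • x1v + u 3 • x2v + u 4 • x3v + u 5 • x4v
      + u 6 • hv + u 7 • ev + u 8 • fv := by
  funext k
  simp only [G.add_apply, G.smul_apply]
  fin_cases k <;> simp [zv, bv, x1v, x2v, x3v, x4v, hv, ev, fv]

lemma sigma_apply (u : G) (k : Fin 9) :
    sigma u k = (![1, 1, -1, -1, -1, -1, 1, 1, 1] : Fin 9 → ℝ) k * u k := rfl

lemma sigma_zv : sigma zv = zv := by funext k; rw [sigma_apply]; fin_cases k <;> simp [zv]
lemma sigma_bv : sigma bv = bv := by funext k; rw [sigma_apply]; fin_cases k <;> simp [bv]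
lemma sigma_hv : sigma hv = hv := by funext k; rw [sigma_apply]; fin_cases k <;> simp [hv]
lemma sigma_ev : sigma ev = ev := by funext k; rw [sigma_apply]; fin_cases k <;> simp [ev]
lemma sigma_fv : sigma fv = fv := by funext k; rw [sigma_apply]; fin_cases k <;> simp [fv]

lemma sigma_x1v : sigma x1v = -x1v := by
  funext k; rw [sigma_apply, G.neg_apply]; fin_cases k <;> simp [x1v]
lemma sigma_x2v : sigma x2v = -x2v := by
  funext k; rw [sigma_apply, G.neg_apply]; fin_cases k <;> simp [x2v]
lemma sigma_x3v : sigma x3v = -x3v := by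
  funext k; rw [sigma_apply, G.neg_apply]; fin_cases k <;> simp [x3v]
lemma sigma_x4v : sigma x4v = -x4v := by
  funext k; rw [sigma_apply, G.neg_apply]; fin_cases k <;> simp [x4v]

lemma sigma_involutive : Function.Involutive sigma := by
  intro u; funext k; rw [sigma_apply, sigma_apply, ← mul_assoc]; fin_cases k <;> norm_num

lemma sigma_lie (u v : G) : sigma ⁅u, v⁆ = ⁅sigma u, sigma v⁆ := by
  funext k; simp only [sigma_apply, G.lie_def]; fin_cases k <;> simp [gb, sigma_apply] <;> ring

lemma map_sigma_Hsub : Hsub.map sigma = Hsub := by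
  refine Submodule.map_span_eq_self_of_involutive sigma_involutive ?_
  simp only [Set.mem_insert_iff, Set.mem_singleton_iff, forall_eq_or_imp, forall_eq,
    map_sub, sigma_x1v, sigma_hv, sigma_bv, sigma_fv, sigma_zv]
  exact ⟨neg_mem (subset_span (by simp)), subset_span (by simp), subset_span (by simp)⟩

lemma pr_x1v : pr x1v = 0 :=
  (Submodule.Quotient.mk_eq_zero _).mpr (subset_span (by simp))

lemma pr_hv : pr hv = pr bv :=
  (Submodule.Quotient.eq _).mpr (subset_span (by simp))

lemma pr_fv : pr fv = pr zv :=
  (Submodule.Quotient.eq _).mpr (subset_span (by simp))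

lemma span_pr_eq_top :
    span ℝ ({pr zv, pr bv, pr ev} ∪ {pr x2v, pr x3v, pr x4v}) = ⊤ := by
  refine eq_top_iff.mpr fun m _ => ?_
  obtain ⟨u, rfl⟩ : ∃ u, pr u = m := Hsub.mkQ_surjective m
  rw [G.eq_sum_basis u]
  simp only [map_add, map_smul, pr_x1v, pr_hv, pr_fv, smul_zero, add_zero]
  apply_rules [add_mem, smul_mem]
  all_goals exact subset_span (by simp)

/-- The map `σ` (negating `x₁,…,x₄` and fixing `z, b, h, e, f`) is a Lie
algebra automorphism of `𝔤`; it preserves `𝔥 = span{x₁, h − b, f − z}`, and the induced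
linear automorphism `σ̄` of `𝔪 = 𝔤/𝔥` conjugates `J` to `−J`: `σ̄ ∘ J = −J ∘ σ̄`. -/
theorem stmt8 :
    -- `σ` takes the prescribed values on the basis
    (sigma zv = zv ∧ sigma bv = bv ∧ sigma hv = hv ∧ sigma ev = ev ∧ sigma fv = fv ∧
      sigma x1v = -x1v ∧ sigma x2v = -x2v ∧ sigma x3v = -x3v ∧ sigma x4v = -x4v) ∧
    -- `σ` is a Lie algebra automorphism of `𝔤`
    Function.Bijective sigma ∧
    (∀ u v : G, sigma ⁅u, v⁆ = ⁅sigma u, sigma v⁆) ∧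
    -- `σ` preserves `𝔥`
    Hsub.map sigma = Hsub ∧
    -- and the induced map `σ̄` on `𝔪 = 𝔤/𝔥` conjugates `J` to `−J`
    (∀ sbar : Module.End ℝ (G ⧸ Hsub), (∀ v : G, sbar (pr v) = pr (sigma v)) →
      ∀ J : Module.End ℝ (G ⧸ Hsub), IsJ J → sbar ∘ₗ J = -(J ∘ₗ sbar)) := by
  refine ⟨⟨sigma_zv, sigma_bv, sigma_hv, sigma_ev, sigma_fv, sigma_x1v, sigma_x2v, sigma_x3v,
    sigma_x4v⟩, sigma_involutive.bijective, sigma_lie, map_sigma_Hsub, ?_⟩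
  rintro sbar hsbar J ⟨Jz, Jb, Je, J2, J3, J4⟩
  refine LinearMap.comp_eq_neg_comp_of_swaps_eigenvectors span_pr_eq_top ?_ ?_ ?_ ?_
  · simp [hsbar, sigma_zv, sigma_bv, sigma_ev]
  · simp [hsbar, sigma_x2v, sigma_x3v, sigma_x4v]
  · simp only [Set.mem_insert_iff, Set.mem_singleton_iff, forall_eq_or_imp, forall_eq, Jz, Jb, Je]
    exact ⟨subset_span (by simp), neg_mem (subset_span (by simp)), subset_span (by simp)⟩
  · simp only [Set.mem_insert_iff, Set.mem_singleton_iff, forall_eq_or_imp, forall_eq, J2, J3, J4]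
    exact ⟨neg_mem (subset_span (by simp)), subset_span (by simp), neg_mem (subset_span (by simp))⟩
end
end
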